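/- arXiv:2112.07809 — 4 statements merged into one kernel-verified Lean document; each statement's English description precedes it below -/
import Mathlib

section
/- Let ℓ be a natural number and let j_ℓ be the spherical Bessel function of the first kind. Then there exists a constant C > 0 such that for all x ≥ 1, |j_ℓ(x) − sin(x − ℓπ/2)/x| ≤ C/x². In particular, j_ℓ(x) behaves as sin(x − ℓπ/2)/x for large argument, up to an error of order 1/x². -/
/-!
Induction on `ℓ` shows that away from `0` the `ℓ`-fold iterate of `f ↦ f'/x` applied to `sin x / x`
has the form `(P(1/x) sin x + Q(1/x) cos x) / x^(ℓ+1)` for real polynomials `P`, `Q`. Evaluated at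
`0`, the recursion for `(P, Q)` acts as the quarter turn `(a, b) ↦ (-b, a)`, which matches
`sin (x - π/2) = -cos x`, `cos (x - π/2) = sin x`; so the `x⁻¹` term of `j_ℓ` is `sin (x - ℓπ/2) / x`.
What remains is `((P(1/x) - P(0)) sin x + (Q(1/x) - Q(0)) cos x) / x`, and both differences are
`O(1/x)` for `x ≥ 1`.
-/

open Real

/-- Rayleigh's formula: `sphericalBessel ℓ x = (-x)^ℓ · ((1/x) d/dx)^ℓ (sin x / x)`,
the spherical Bessel function of the first kind of order `ℓ`. -/
noncomputable def sphericalBessel (ℓ : ℕ) (x : ℝ) : ℝ :=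
  (-x) ^ ℓ * ((fun f : ℝ → ℝ => fun y => deriv f y / y)^[ℓ] (fun y => Real.sin y / y)) x

open Polynomial

theorem Polynomial.exists_abs_eval_sub_eval_zero_le (p : ℝ[X]) :
    ∃ C, 0 ≤ C ∧ ∀ u : ℝ, |u| ≤ 1 → |p.eval u - p.eval 0| ≤ C * |u| := by
  obtain ⟨C, hC⟩ := (isCompact_closedBall (0 : ℝ) 1).exists_bound_of_continuousOn
    p.divX.continuous.continuousOn
  refine ⟨C, (norm_nonneg _).trans (hC 0 (Metric.mem_closedBall_self zero_le_one)), ?_⟩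
  intro u hu
  have hdivX : p.eval u - p.eval 0 = u * p.divX.eval u := by
    conv_lhs => rw [← p.X_mul_divX_add]
    simp only [eval_add, eval_mul, eval_X, eval_C, ← coeff_zero_eq_eval_zero]
    ring
  rw [hdivX, abs_mul, mul_comm]
  gcongr
  exact hC u (by simpa using hu)

theorem Real.abs_mul_sin_add_mul_cos_le (a b x : ℝ) : |a * sin x + b * cos x| ≤ |a| + |b| := by
  refine (abs_add_le _ _).trans ?_
  rw [abs_mul, abs_mul]
  gcongr
  · exact mul_le_of_le_one_right (abs_nonneg a) (abs_sin_le_one x)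
  · exact mul_le_of_le_one_right (abs_nonneg b) (abs_cos_le_one x)

namespace SphericalBessel

noncomputable def trigForm (m : ℕ) (pq : ℝ[X] × ℝ[X]) (y : ℝ) : ℝ :=
  (pq.1.eval y⁻¹ * sin y + pq.2.eval y⁻¹ * cos y) / y ^ m

noncomputable def step (m : ℕ) (pq : ℝ[X] × ℝ[X]) : ℝ[X] × ℝ[X] :=
  (-pq.2 - X ^ 2 * derivative pq.1 - C (m : ℝ) * X * pq.1,
    pq.1 - X ^ 2 * derivative pq.2 - C (m : ℝ) * X * pq.2)

noncomputable def polys : ℕ → ℝ[X] × ℝ[X]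
  | 0 => (1, 0)
  | n + 1 => step (n + 1) (polys n)

theorem deriv_trigForm_div (m : ℕ) (pq : ℝ[X] × ℝ[X]) {x : ℝ} (hx : x ≠ 0) :
    deriv (trigForm m pq) x / x = trigForm (m + 1) (step m pq) x := by
  obtain ⟨p, q⟩ := pq
  have hp := (p.hasDerivAt x⁻¹).comp x (hasDerivAt_inv hx)
  have hq := (q.hasDerivAt x⁻¹).comp x (hasDerivAt_inv hx)
  have hform : HasDerivAt (trigForm m (p, q)) _ x :=
    ((hp.mul (hasDerivAt_sin x)).add (hq.mul (hasDerivAt_cos x))).div (hasDerivAt_pow m x)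
      (pow_ne_zero _ hx)
  rw [hform.deriv, trigForm, step]
  simp only [Function.comp_apply, Pi.add_apply, Pi.mul_apply, eval_sub, eval_mul, eval_neg,
    eval_pow, eval_X, eval_C]
  rcases m with _ | m
  · field_simp
    ring
  · rw [Nat.add_sub_cancel]
    field_simp
    ring

theorem iterate_eq_trigForm (ℓ : ℕ) {x : ℝ} (hx : x ≠ 0) :
    ((fun f : ℝ → ℝ => fun y => deriv f y / y)^[ℓ] (fun y => sin y / y)) x
      = trigForm (ℓ + 1) (polys ℓ) x := by
  induction ℓ generalizing x with
  | zero => simp [trigForm, polys]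
  | succ n ih =>
    rw [Function.iterate_succ_apply', polys, ← deriv_trigForm_div _ _ hx]
    congr 1
    refine Filter.EventuallyEq.deriv_eq ?_
    filter_upwards [isOpen_ne.mem_nhds hx] with y hy
    exact ih hy

theorem sphericalBessel_eq (ℓ : ℕ) {x : ℝ} (hx : x ≠ 0) :
    sphericalBessel ℓ x = (-1) ^ ℓ *
      ((polys ℓ).1.eval x⁻¹ * sin x + (polys ℓ).2.eval x⁻¹ * cos x) / x := by
  rw [sphericalBessel, iterate_eq_trigForm ℓ hx, trigForm, neg_pow]
  field_simp
  ring

theorem neg_one_pow_mul_polys_eval_zero_eq_sin (ℓ : ℕ) (x : ℝ) :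
    (-1) ^ ℓ * ((polys ℓ).1.eval 0 * sin x + (polys ℓ).2.eval 0 * cos x)
      = sin (x - ℓ * π / 2) := by
  induction ℓ generalizing x with
  | zero => simp [polys]
  | succ n ih =>
    have hshift : x - ↑(n + 1) * π / 2 = (x - π / 2) - n * π / 2 := by push_cast; ring
    rw [hshift, ← ih, sin_sub_pi_div_two, cos_sub_pi_div_two]
    simp only [polys, step, eval_sub, eval_neg, eval_mul, eval_pow, eval_X]
    ring

theorem sphericalBessel_sub_sin_div_eq (ℓ : ℕ) {x : ℝ} (hx : x ≠ 0) :
    sphericalBessel ℓ x - sin (x - ℓ * π / 2) / x = (-1) ^ ℓ *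
      (((polys ℓ).1.eval x⁻¹ - (polys ℓ).1.eval 0) * sin x
        + ((polys ℓ).2.eval x⁻¹ - (polys ℓ).2.eval 0) * cos x) / x := by
  rw [sphericalBessel_eq ℓ hx, ← neg_one_pow_mul_polys_eval_zero_eq_sin ℓ x]
  ring

end SphericalBessel

/-- Large-argument asymptotics: there is `C > 0` with
`|j_ℓ(x) − sin(x − ℓπ/2)/x| ≤ C/x²` for all `x ≥ 1`. -/
theorem sphericalBessel_large_argument (ℓ : ℕ) :
    ∃ C : ℝ, 0 < C ∧ ∀ x : ℝ, 1 ≤ x →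
      |sphericalBessel ℓ x - Real.sin (x - ℓ * Real.pi / 2) / x| ≤ C / x ^ 2 := by
  obtain ⟨A, hA0, hA⟩ := (SphericalBessel.polys ℓ).1.exists_abs_eval_sub_eval_zero_le
  obtain ⟨B, hB0, hB⟩ := (SphericalBessel.polys ℓ).2.exists_abs_eval_sub_eval_zero_le
  refine ⟨A + B + 1, by positivity, fun x hx => ?_⟩
  have hx0 : 0 < x := one_pos.trans_le hx
  have hu : |x⁻¹| ≤ 1 := by rw [abs_inv, abs_of_pos hx0]; exact inv_le_one_of_one_le₀ hx
  rw [SphericalBessel.sphericalBessel_sub_sin_div_eq ℓ hx0.ne', abs_div, abs_mul, abs_pow,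
    abs_neg, abs_one, one_pow, one_mul, abs_of_pos hx0]
  calc _ ≤ (A * |x⁻¹| + B * |x⁻¹|) / x := by
        gcongr
        exact (abs_mul_sin_add_mul_cos_le _ _ x).trans (add_le_add (hA _ hu) (hB _ hu))
    _ = (A + B) / x ^ 2 := by
        rw [abs_of_pos (inv_pos.2 hx0)]
        field_simp
    _ ≤ (A + B + 1) / x ^ 2 := div_le_div_of_nonneg_right (by linarith) (by positivity)
end

section
/- Let ℓ, ℓ' be natural numbers, r, r' > 0, and let n be an integer with n ≤ 0 and ℓ + ℓ' + n + 1 > 0. Then the function k ↦ k^n · j_ℓ(kr) · j_{ℓ'}(kr') is Lebesgue integrable on (0, ∞). -/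
open Real

/-!
Write `j_ℓ(x) = (-x)^ℓ g_ℓ(x)` with `g_ℓ = ((1/x) d/dx)^ℓ (sin x / x)`.
Poisson's formula `g_ℓ(x) = (-1)^ℓ / (2^(ℓ+1) ℓ!) ∫_{-1}^1 (1 - t²)^ℓ cos(xt) dt` gives
`|g_ℓ| ≤ 1`, hence `|j_ℓ(x)| ≤ x^ℓ`, and the integrand is `O(k^(ℓ+ℓ'+n))` near `0`, with
exponent `> -1`. On the other hand `g_ℓ(x) = (A(x) sin x + B(x) cos x) / x^(2ℓ+1)` with
polynomials `A, B` of degree `≤ ℓ`, so `j_ℓ(x) = O(1/x)` and, as `n ≤ 0`, the integrand is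
`O(k⁻²)` near `∞`.
-/

open MeasureTheory Set Polynomial Nat

noncomputable def rayleighDeriv (ℓ : ℕ) : ℝ → ℝ :=
  (fun f : ℝ → ℝ => fun y => deriv f y / y)^[ℓ] (fun y => Real.sin y / y)

lemma sphericalBessel_eq_mul_rayleighDeriv (ℓ : ℕ) (x : ℝ) :
    sphericalBessel ℓ x = (-x) ^ ℓ * rayleighDeriv ℓ x := rfl

lemma rayleighDeriv_zero : rayleighDeriv 0 = fun y => Real.sin y / y := rfl

lemma rayleighDeriv_succ (ℓ : ℕ) :
    rayleighDeriv (ℓ + 1) = fun y => deriv (rayleighDeriv ℓ) y / y := by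
  simp only [rayleighDeriv, Function.iterate_succ_apply']

lemma measurable_rayleighDeriv : ∀ ℓ, Measurable (rayleighDeriv ℓ)
  | 0 => measurable_sin.div measurable_id
  | ℓ + 1 => by rw [rayleighDeriv_succ]; exact (measurable_deriv _).div measurable_id

@[fun_prop]
lemma measurable_sphericalBessel (ℓ : ℕ) : Measurable (sphericalBessel ℓ) :=
  (measurable_neg.pow_const ℓ).mul (measurable_rayleighDeriv ℓ)

/-- Poisson's integral representation of `j_ℓ(x) / x^ℓ`, up to normalization. -/
noncomputable def poissonIntegral (ℓ : ℕ) (x : ℝ) : ℝ :=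
  ∫ t in (-1 : ℝ)..1, (1 - t ^ 2) ^ ℓ * cos (x * t)

lemma abs_one_sub_sq_pow_le_one (ℓ : ℕ) {t : ℝ} (ht : |t| ≤ 1) :
    |(1 - t ^ 2) ^ ℓ| ≤ 1 := by
  have := (sq_le_one_iff_abs_le_one t).2 ht
  rw [abs_pow]
  exact pow_le_one₀ (abs_nonneg _) (abs_le.2 ⟨by linarith, by nlinarith⟩)

lemma abs_le_one_of_mem_uIoc {t : ℝ} (ht : t ∈ uIoc (-1) 1) : |t| ≤ 1 := by
  rw [uIoc_of_le (by norm_num)] at ht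
  exact abs_le.2 ⟨ht.1.le, ht.2⟩

lemma hasDerivAt_poissonIntegral' (ℓ : ℕ) (x : ℝ) :
    HasDerivAt (poissonIntegral ℓ)
      (∫ t in (-1 : ℝ)..1, (1 - t ^ 2) ^ ℓ * (-sin (x * t) * t)) x := by
  have hF (y : ℝ) : Continuous fun t : ℝ => (1 - t ^ 2) ^ ℓ * cos (y * t) := by fun_prop
  have hF' : Continuous fun t : ℝ => (1 - t ^ 2) ^ ℓ * (-sin (x * t) * t) := by fun_prop
  refine (intervalIntegral.hasDerivAt_integral_of_dominated_loc_of_deriv_le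
    (F' := fun y t => (1 - t ^ 2) ^ ℓ * (-sin (y * t) * t)) (bound := fun _ => 1)
    Filter.univ_mem (.of_forall fun y => (hF y).aestronglyMeasurable)
    ((hF x).intervalIntegrable _ _) hF'.aestronglyMeasurable ?_ intervalIntegrable_const ?_).2
  · refine .of_forall fun t ht y _ => ?_
    have h_t := abs_le_one_of_mem_uIoc ht
    rw [norm_eq_abs, abs_mul, abs_mul, abs_neg]
    exact mul_le_one₀ (abs_one_sub_sq_pow_le_one ℓ h_t) (by positivity)
      (mul_le_one₀ (abs_sin_le_one _) (abs_nonneg _) h_t)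
  · refine .of_forall fun t _ y _ => ?_
    simpa [mul_comm] using
      (((hasDerivAt_id y).mul_const t).cos.const_mul ((1 - t ^ 2) ^ ℓ))

/-- Integration by parts against `sin (x t)`, with `-(1 - t²)^(ℓ+1) / (2(ℓ+1))` as a
primitive of `t (1 - t²)^ℓ` that vanishes at `± 1`. -/
lemma integral_sin_mul_eq_poissonIntegral (ℓ : ℕ) (x : ℝ) :
    ∫ t in (-1 : ℝ)..1, sin (x * t) * (t * (1 - t ^ 2) ^ ℓ)
      = x / (2 * (ℓ + 1)) * poissonIntegral (ℓ + 1) x := by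
  rw [intervalIntegral.integral_mul_deriv_eq_deriv_mul
    (u' := fun t => cos (x * t) * x) (v := fun t => -(1 - t ^ 2) ^ (ℓ + 1) / (2 * (ℓ + 1)))
    (fun t _ => by simpa [mul_comm] using ((hasDerivAt_id t).const_mul x).sin)
    (fun t _ => ?_) ((by fun_prop : Continuous fun t => cos (x * t) * x).intervalIntegrable _ _)
    ((by fun_prop : Continuous fun t : ℝ => t * (1 - t ^ 2) ^ ℓ).intervalIntegrable _ _)]
  · norm_num
    rw [poissonIntegral, ← intervalIntegral.integral_neg, ← intervalIntegral.integral_const_mul]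
    refine intervalIntegral.integral_congr fun t _ => ?_
    ring
  · convert (((hasDerivAt_pow 2 t).const_sub 1).fun_pow (ℓ + 1)).fun_neg.div_const
      (2 * ((ℓ : ℝ) + 1)) using 1
    field_simp
    push_cast
    ring

lemma hasDerivAt_poissonIntegral (ℓ : ℕ) (x : ℝ) :
    HasDerivAt (poissonIntegral ℓ) (-(x / (2 * (ℓ + 1))) * poissonIntegral (ℓ + 1) x) x := by
  convert hasDerivAt_poissonIntegral' ℓ x using 1
  rw [neg_mul, ← integral_sin_mul_eq_poissonIntegral, ← intervalIntegral.integral_neg]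
  exact intervalIntegral.integral_congr fun t _ => by ring

lemma poissonIntegral_zero {x : ℝ} (hx : x ≠ 0) : poissonIntegral 0 x = 2 * sin x / x := by
  simp only [poissonIntegral, pow_zero, one_mul, intervalIntegral.integral_comp_mul_left cos hx,
    integral_cos, smul_eq_mul, mul_neg, mul_one, sin_neg]
  field_simp
  ring

lemma rayleighDeriv_eq_poissonIntegral (ℓ : ℕ) {x : ℝ} (hx : x ≠ 0) :
    rayleighDeriv ℓ x = (-1) ^ ℓ / (2 ^ (ℓ + 1) * ℓ !) * poissonIntegral ℓ x := by
  induction ℓ generalizing x with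
  | zero =>
    rw [poissonIntegral_zero hx, rayleighDeriv_zero]
    field_simp
    norm_num
  | succ ℓ ih =>
    have hderiv : HasDerivAt (rayleighDeriv ℓ) _ x :=
      ((hasDerivAt_poissonIntegral ℓ x).const_mul ((-1) ^ ℓ / (2 ^ (ℓ + 1) * ℓ ! : ℝ)))
        |>.congr_of_eventuallyEq (eventually_ne_nhds hx |>.mono fun y hy => ih hy)
    simp only [rayleighDeriv_succ]
    rw [hderiv.deriv, Nat.factorial_succ]
    push_cast
    field_simp
    ring

lemma abs_poissonIntegral_le_two (ℓ : ℕ) (x : ℝ) : |poissonIntegral ℓ x| ≤ 2 := by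
  have h := intervalIntegral.norm_integral_le_of_norm_le_const (C := 1)
    (f := fun t : ℝ => (1 - t ^ 2) ^ ℓ * cos (x * t)) (a := -1) (b := 1) fun t ht => by
      rw [norm_eq_abs, abs_mul]
      exact mul_le_one₀ (abs_one_sub_sq_pow_le_one ℓ (abs_le_one_of_mem_uIoc ht)) (abs_nonneg _)
        (abs_cos_le_one _)
  norm_num at h
  exact h

lemma abs_rayleighDeriv_le_one (ℓ : ℕ) {x : ℝ} (hx : x ≠ 0) :
    |rayleighDeriv ℓ x| ≤ 1 := by
  have h2 : (2 : ℝ) ≤ 2 ^ (ℓ + 1) * ℓ ! :=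
    calc (2 : ℝ) = 2 ^ 1 * 1 := by norm_num
      _ ≤ 2 ^ (ℓ + 1) * ℓ ! := by
        gcongr
        · norm_num
        · omega
        · exact_mod_cast ℓ.factorial_pos
  rw [rayleighDeriv_eq_poissonIntegral ℓ hx, abs_mul, abs_div, abs_pow, abs_neg, abs_one,
    one_pow, abs_of_pos (by positivity)]
  calc 1 / (2 ^ (ℓ + 1) * ℓ !) * |poissonIntegral ℓ x| ≤ 1 / 2 * 2 := by
        gcongr
        exact abs_poissonIntegral_le_two ℓ x
    _ = 1 := by norm_num

lemma abs_sphericalBessel_le_pow (ℓ : ℕ) {x : ℝ} (hx : 0 < x) :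
    |sphericalBessel ℓ x| ≤ x ^ ℓ := by
  rw [sphericalBessel_eq_mul_rayleighDeriv, abs_mul, abs_pow, abs_neg, abs_of_pos hx]
  exact mul_le_of_le_one_right (by positivity) (abs_rayleighDeriv_le_one ℓ hx.ne')

lemma exists_rayleighDeriv_eq_trigPoly (ℓ : ℕ) :
    ∃ A B : ℝ[X], A.natDegree ≤ ℓ ∧ B.natDegree ≤ ℓ ∧ ∀ x : ℝ, x ≠ 0 →
      rayleighDeriv ℓ x = (A.eval x * sin x + B.eval x * cos x) / x ^ (2 * ℓ + 1) := by
  induction ℓ with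
  | zero => exact ⟨1, 0, by simp, by simp, fun x _ => by simp [rayleighDeriv_zero]⟩
  | succ ℓ ih =>
    obtain ⟨A, B, hA, hB, hAB⟩ := ih
    have hdeg (P Q : ℝ[X]) (hP : P.natDegree ≤ ℓ) (hQ : Q.natDegree ≤ ℓ) :
        (X * Q - C ((2 * ℓ + 1 : ℕ) : ℝ) * P).natDegree ≤ ℓ + 1 :=
      (natDegree_sub_le_of_le (natDegree_mul_le_of_le natDegree_X_le hQ)
        ((natDegree_C_mul_le _ _).trans hP)).trans (by omega)
    have hA' := (natDegree_derivative_le A).trans (by omega : A.natDegree - 1 ≤ ℓ)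
    have hB' := (natDegree_derivative_le B).trans (by omega : B.natDegree - 1 ≤ ℓ)
    refine ⟨_, _, hdeg A _ hA ((natDegree_sub_le_of_le hA' hB).trans_eq (max_self ℓ)),
      hdeg B _ hB (natDegree_add_le_of_degree_le hA hB'), fun x hx => ?_⟩
    have hN : HasDerivAt (fun y => A.eval y * sin y + B.eval y * cos y)
        ((derivative A).eval x * sin x + A.eval x * cos x
          + ((derivative B).eval x * cos x + B.eval x * -sin x)) x :=
      ((A.hasDerivAt x).mul (hasDerivAt_sin x)).add ((B.hasDerivAt x).mul (hasDerivAt_cos x))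
    have hg : HasDerivAt (rayleighDeriv ℓ) _ x :=
      (hN.div (hasDerivAt_pow (2 * ℓ + 1) x) (pow_ne_zero _ hx)).congr_of_eventuallyEq
        (eventually_ne_nhds hx |>.mono fun y hy => hAB y hy)
    simp only [rayleighDeriv_succ]
    rw [hg.deriv]
    simp only [eval_sub, eval_mul, eval_add, eval_X, eval_C]
    field_simp
    push_cast
    ring

lemma abs_eval_le_sum_mul_pow (p : ℝ[X]) {d : ℕ} (hd : p.natDegree ≤ d) {x : ℝ}
    (hx : 1 ≤ x) :
    |p.eval x| ≤ (∑ i ∈ Finset.range (d + 1), |p.coeff i|) * x ^ d := by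
  rw [eval_eq_sum_range' (Nat.lt_succ_of_le hd), Finset.sum_mul]
  refine (Finset.abs_sum_le_sum_abs _ _).trans (Finset.sum_le_sum fun i hi => ?_)
  rw [abs_mul, abs_pow, abs_of_nonneg (by linarith : (0 : ℝ) ≤ x)]
  gcongr
  exact Nat.lt_succ_iff.mp (Finset.mem_range.mp hi)

lemma exists_abs_sphericalBessel_le_div_of_one_le (ℓ : ℕ) :
    ∃ C, ∀ x : ℝ, 1 ≤ x → |sphericalBessel ℓ x| ≤ C / x := by
  obtain ⟨A, B, hA, hB, hAB⟩ := exists_rayleighDeriv_eq_trigPoly ℓ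
  set CA := ∑ i ∈ Finset.range (ℓ + 1), |A.coeff i|
  set CB := ∑ i ∈ Finset.range (ℓ + 1), |B.coeff i|
  refine ⟨CA + CB, fun x hx => ?_⟩
  have hx0 : 0 < x := by linarith
  have hnum : |A.eval x * sin x + B.eval x * cos x| ≤ (CA + CB) * x ^ ℓ :=
    calc |A.eval x * sin x + B.eval x * cos x|
        ≤ |A.eval x| * |sin x| + |B.eval x| * |cos x| := by
          rw [← abs_mul, ← abs_mul]; exact abs_add_le _ _
      _ ≤ CA * x ^ ℓ * 1 + CB * x ^ ℓ * 1 := by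
          gcongr
          exacts [abs_eval_le_sum_mul_pow A hA hx, abs_sin_le_one x,
            abs_eval_le_sum_mul_pow B hB hx, abs_cos_le_one x]
      _ = (CA + CB) * x ^ ℓ := by ring
  rw [sphericalBessel_eq_mul_rayleighDeriv, hAB x hx0.ne', abs_mul, abs_div, abs_pow, abs_pow,
    abs_neg, abs_of_pos hx0]
  calc x ^ ℓ * (|A.eval x * sin x + B.eval x * cos x| / x ^ (2 * ℓ + 1))
      ≤ x ^ ℓ * ((CA + CB) * x ^ ℓ / x ^ (2 * ℓ + 1)) := by gcongr
    _ = (CA + CB) / x := by field_simp; ring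

lemma exists_abs_sphericalBessel_le_div (ℓ : ℕ) :
    ∃ C, 0 ≤ C ∧ ∀ x : ℝ, 0 < x → |sphericalBessel ℓ x| ≤ C / x := by
  obtain ⟨C, hC⟩ := exists_abs_sphericalBessel_le_div_of_one_le ℓ
  refine ⟨max C 1, by positivity, fun x hx => ?_⟩
  rcases le_or_gt 1 x with h1 | h1
  · exact (hC x h1).trans (by gcongr; exact le_max_left _ _)
  · calc |sphericalBessel ℓ x| ≤ x ^ ℓ := abs_sphericalBessel_le_pow ℓ hx
      _ ≤ 1 := pow_le_one₀ hx.le h1.le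
      _ ≤ 1 / x := by rw [le_div_iff₀ hx]; linarith
      _ ≤ max C 1 / x := by gcongr; exact le_max_right _ _

lemma integrableOn_Ioi_zero_of_norm_le_rpow {E : Type*} [NormedAddCommGroup E] {f : ℝ → E}
    {a b C₀ C₁ : ℝ} (hf : AEStronglyMeasurable f (volume.restrict (Ioi 0)))
    (ha : -1 < a) (hb : b < -1) (h₀ : ∀ x ∈ Ioc 0 1, ‖f x‖ ≤ C₀ * x ^ a)
    (h₁ : ∀ x ∈ Ioi 1, ‖f x‖ ≤ C₁ * x ^ b) :
    IntegrableOn f (Ioi 0) := by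
  rw [← Ioc_union_Ioi_eq_Ioi zero_le_one]
  refine IntegrableOn.union ?_ ?_
  · have hpow : IntegrableOn (fun x : ℝ => x ^ a) (Ioc 0 1) :=
      (intervalIntegrable_iff_integrableOn_Ioc_of_le zero_le_one).1
        (intervalIntegral.intervalIntegrable_rpow' ha)
    refine (hpow.const_mul C₀).mono' (hf.mono_set Ioc_subset_Ioi_self) ?_
    filter_upwards [ae_restrict_mem measurableSet_Ioc] using h₀
  · refine ((integrableOn_Ioi_rpow_of_lt hb zero_lt_one).const_mul C₁).mono'
      (hf.mono_set (Ioi_subset_Ioi zero_le_one)) ?_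
    filter_upwards [ae_restrict_mem measurableSet_Ioi] using h₁

/-- For `n ≤ 0` an integer with `ℓ + ℓ' + n + 1 > 0` and `r, r' > 0`, the function
`k ↦ k^n j_ℓ(kr) j_{ℓ'}(kr')` is Lebesgue integrable on `(0, ∞)`. -/
theorem doubleSBF_integrable (ℓ ℓ' : ℕ) (n : ℤ) (hn : n ≤ 0)
    (hconv : 0 < (ℓ : ℤ) + ℓ' + n + 1) (r r' : ℝ) (hr : 0 < r) (hr' : 0 < r') :
    MeasureTheory.IntegrableOn
      (fun k : ℝ => k ^ n * sphericalBessel ℓ (k * r) * sphericalBessel ℓ' (k * r'))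
      (Set.Ioi 0) := by
  obtain ⟨C, hC₀, hC⟩ := exists_abs_sphericalBessel_le_div ℓ
  obtain ⟨C', hC'₀, hC'⟩ := exists_abs_sphericalBessel_le_div ℓ'
  refine integrableOn_Ioi_zero_of_norm_le_rpow (a := ((ℓ + ℓ' + n : ℤ) : ℝ))
    (b := ((-2 : ℤ) : ℝ)) (C₀ := r ^ ℓ * r' ^ ℓ') (C₁ := C * C' / (r * r'))
    (by fun_prop : Measurable _).aestronglyMeasurable (by exact_mod_cast (by omega))
    (by norm_num) (fun k ⟨hk, _⟩ => ?_) (fun k (hk : 1 < k) => ?_)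
  · have hkn := zpow_pos hk n
    calc ‖k ^ n * sphericalBessel ℓ (k * r) * sphericalBessel ℓ' (k * r')‖
        ≤ k ^ n * (k * r) ^ ℓ * (k * r') ^ ℓ' := by
          rw [norm_mul, norm_mul, norm_of_nonneg hkn.le]
          gcongr
          exacts [abs_sphericalBessel_le_pow ℓ (by positivity),
            abs_sphericalBessel_le_pow ℓ' (by positivity)]
      _ = r ^ ℓ * r' ^ ℓ' * k ^ ((ℓ + ℓ' + n : ℤ) : ℝ) := by
          rw [rpow_intCast, zpow_add₀ hk.ne', zpow_add₀ hk.ne', zpow_natCast, zpow_natCast]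
          ring
  · have hk₀ : 0 < k := by linarith
    calc ‖k ^ n * sphericalBessel ℓ (k * r) * sphericalBessel ℓ' (k * r')‖
        ≤ 1 * (C / (k * r)) * (C' / (k * r')) := by
          rw [norm_mul, norm_mul, norm_of_nonneg (zpow_pos hk₀ n).le]
          gcongr
          exacts [zpow_le_one_of_nonpos₀ hk.le hn, hC _ (by positivity), hC' _ (by positivity)]
      _ = C * C' / (r * r') * k ^ ((-2 : ℤ) : ℝ) := by
          rw [rpow_intCast]
          field_simp
end

section
/- Let r₁, r₂, u > 0 with u ≠ r₁ + r₂ and u ≠ |r₁ − r₂|. Then the improper integral lim_{K→∞} ∫₀^K k² j₀(kr₁) j₀(kr₂) j₀(ku) dk exists, and it equals π/(4 r₁ r₂ u) if |r₁ − r₂| < u < r₁ + r₂, and equals 0 if u > r₁ + r₂ or u < |r₁ − r₂|. In other words, the triple spherical-Bessel integral ∫₀^∞ k² j₀(kr₁) j₀(kr₂) j₀(ku) dk equals (π/(4 r₁ r₂ u))·β(Δ) with Δ = (r₁² + r₂² − u²)/(2 r₁ r₂), vanishing unless r₁, r₂, u form a (nondegenerate) triangle. -/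
/-!
By the product-to-sum formula, `k² j₀(kr₁) j₀(kr₂) j₀(ku)` is `(4 r₁ r₂ u)⁻¹` times
`Σ ± sin (k c) / k` over `c ∈ {r₁ + r₂ - u, r₁ - r₂ + u, -r₁ + r₂ + u, r₁ + r₂ + u}`, and by
Dirichlet's integral `∫₀^K sin (k c) / k → (π / 2) · sign c`. The last `c` is positive, and any
two of the first three add up to `2r₁`, `2r₂` or `2u > 0`, so at most one of them is negative: all
three are positive exactly for a triangle, giving `π / (4 r₁ r₂ u)`, and otherwise the signs cancel
to `0`.

Dirichlet's integral itself comes from `sin x / x = ∫₀^∞ e^{-xt} sin x dt` and Fubini: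
`∫₀^K sin x / x = ∫₀^∞ (1 - e^{-tK} (t sin K + cos K)) / (1 + t²) dt`, whose second part is
`O(1 / K)`.
-/

open Real MeasureTheory Filter Set Topology

lemma hasDerivAt_exp_neg_mul_mul_sin_primitive (t x : ℝ) :
    HasDerivAt (fun y => -(exp (-t * y) * (t * sin y + cos y)) / (1 + t ^ 2))
      (exp (-t * x) * sin x) x := by
  have h := ((((hasDerivAt_id' x).const_mul (-t)).exp.fun_mul
    (((hasDerivAt_sin x).const_mul t).fun_add (hasDerivAt_cos x))).fun_neg).div_const (1 + t ^ 2)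
  refine h.congr_deriv ?_
  field_simp
  ring

lemma integral_exp_neg_mul_mul_sin (t K : ℝ) :
    ∫ x in (0 : ℝ)..K, exp (-t * x) * sin x
      = (1 - exp (-t * K) * (t * sin K + cos K)) / (1 + t ^ 2) := by
  rw [intervalIntegral.integral_eq_sub_of_hasDerivAt
    (fun x _ => hasDerivAt_exp_neg_mul_mul_sin_primitive t x)
    (Continuous.intervalIntegrable (by fun_prop) _ _)]
  simp
  ring

lemma integral_exp_neg_mul_Ioi {b : ℝ} (hb : 0 < b) : ∫ t in Ioi (0 : ℝ), exp (-b * t) = b⁻¹ := by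
  rw [integral_exp_mul_Ioi (neg_neg_of_pos hb) 0]
  simp [neg_div]

lemma integrableOn_exp_neg_mul_Ioi {b : ℝ} (hb : 0 < b) :
    IntegrableOn (fun t => exp (-b * t)) (Ioi 0) :=
  integrableOn_exp_mul_Ioi (neg_neg_of_pos hb) 0

lemma integrable_exp_neg_mul_mul_sin_prod (K : ℝ) :
    Integrable (Function.uncurry fun x t => exp (-x * t) * sin x)
      ((volume.restrict (Ioc (0 : ℝ) K)).prod (volume.restrict (Ioi 0))) := by
  have hmeas : AEStronglyMeasurable (Function.uncurry fun x t => exp (-x * t) * sin x)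
      ((volume.restrict (Ioc (0 : ℝ) K)).prod (volume.restrict (Ioi 0))) :=
    (by fun_prop : Continuous (Function.uncurry fun x t => exp (-x * t) * sin x)).aestronglyMeasurable
  refine (integrable_prod_iff hmeas).2 ⟨?_, ?_⟩
  · filter_upwards [ae_restrict_mem measurableSet_Ioc] with x hx
    exact (integrableOn_exp_neg_mul_Ioi hx.1).mul_const (sin x)
  · refine (integrable_const (1 : ℝ)).mono' hmeas.norm.integral_prod_right' ?_
    filter_upwards [ae_restrict_mem measurableSet_Ioc] with x hx
    have hx0 : 0 < x := hx.1
    simp only [Function.uncurry_apply_pair, norm_mul, norm_eq_abs, abs_exp]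
    rw [integral_mul_const, integral_exp_neg_mul_Ioi hx0, abs_of_nonneg (by positivity),
      inv_mul_le_iff₀ hx0, mul_one]
    exact (abs_sin_le_abs).trans (abs_of_pos hx0).le

lemma integral_sin_div_eq_integral_Ioi {K : ℝ} (hK : 0 ≤ K) :
    ∫ x in (0 : ℝ)..K, sin x / x
      = ∫ t in Ioi (0 : ℝ), (1 - exp (-t * K) * (t * sin K + cos K)) / (1 + t ^ 2) := by
  calc ∫ x in (0 : ℝ)..K, sin x / x
      = ∫ x in Ioc (0 : ℝ) K, ∫ t in Ioi (0 : ℝ), exp (-x * t) * sin x := by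
        rw [intervalIntegral.integral_of_le hK]
        refine setIntegral_congr_fun measurableSet_Ioc fun x hx => ?_
        rw [integral_mul_const, integral_exp_neg_mul_Ioi hx.1, div_eq_inv_mul]
    _ = ∫ t in Ioi (0 : ℝ), ∫ x in Ioc (0 : ℝ) K, exp (-x * t) * sin x :=
        integral_integral_swap (integrable_exp_neg_mul_mul_sin_prod K)
    _ = _ := by
        refine setIntegral_congr_fun measurableSet_Ioi fun t _ => ?_
        simp_rw [← integral_exp_neg_mul_mul_sin, intervalIntegral.integral_of_le hK, neg_mul,
          mul_comm t]

lemma abs_exp_neg_mul_mul_div_one_add_sq_le {t : ℝ} (ht : 0 ≤ t) (K : ℝ) :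
    |exp (-t * K) * (t * sin K + cos K) / (1 + t ^ 2)| ≤ 2 * exp (-K * t) := by
  have hsum : |t * sin K + cos K| ≤ t + 1 := by
    calc |t * sin K + cos K| ≤ |t| * |sin K| + |cos K| := by rw [← abs_mul]; exact abs_add_le _ _
      _ ≤ t * 1 + 1 := by
          rw [abs_of_nonneg ht]
          gcongr
          exacts [abs_sin_le_one K, abs_cos_le_one K]
      _ = t + 1 := by rw [mul_one]
  rw [abs_div, abs_mul, abs_exp, abs_of_pos (by positivity : (0 : ℝ) < 1 + t ^ 2),
    div_le_iff₀ (by positivity), neg_mul_comm K, mul_comm K]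
  calc exp (-t * K) * |t * sin K + cos K| ≤ exp (-t * K) * (t + 1) := by gcongr
    _ ≤ 2 * exp (-t * K) * (1 + t ^ 2) := by nlinarith [sq_nonneg (t - 1), exp_pos (-t * K)]

lemma tendsto_integral_sin_div_atTop :
    Tendsto (fun K => ∫ x in (0 : ℝ)..K, sin x / x) atTop (𝓝 (π / 2)) := by
  set err := fun K : ℝ => ∫ t in Ioi (0 : ℝ), exp (-t * K) * (t * sin K + cos K) / (1 + t ^ 2)
  have h_eq : ∀ᶠ K in atTop, π / 2 - err K = ∫ x in (0 : ℝ)..K, sin x / x := by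
    filter_upwards [eventually_gt_atTop 0] with K hK
    have h_dom : IntegrableOn (fun t => 2 * exp (-K * t)) (Ioi 0) :=
      (integrableOn_exp_neg_mul_Ioi hK).const_mul 2
    have h_err_int : IntegrableOn
        (fun t => exp (-t * K) * (t * sin K + cos K) / (1 + t ^ 2)) (Ioi 0) := by
      refine h_dom.mono' (Continuous.aestronglyMeasurable ?_) ?_
      · exact Continuous.div (by fun_prop) (by fun_prop) fun t => by positivity
      · filter_upwards [ae_restrict_mem measurableSet_Ioi] with t ht
        exact abs_exp_neg_mul_mul_div_one_add_sq_le (le_of_lt ht) K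
    rw [integral_sin_div_eq_integral_Ioi hK.le]
    simp_rw [sub_div, one_div]
    rw [integral_sub integrable_inv_one_add_sq.integrableOn h_err_int, integral_Ioi_inv_one_add_sq,
      arctan_zero, sub_zero]
  have h_err : Tendsto err atTop (𝓝 0) := by
    refine squeeze_zero_norm' ?_ (by simpa using (tendsto_inv_atTop_zero (𝕜 := ℝ)).const_mul 2)
    filter_upwards [eventually_gt_atTop 0] with K hK
    calc ‖err K‖ ≤ ∫ t in Ioi (0 : ℝ), 2 * exp (-K * t) :=
          norm_integral_le_of_norm_le ((integrableOn_exp_neg_mul_Ioi hK).const_mul 2)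
            ((ae_restrict_mem measurableSet_Ioi).mono fun t ht =>
              abs_exp_neg_mul_mul_div_one_add_sq_le (le_of_lt ht) K)
      _ = 2 * K⁻¹ := by rw [integral_const_mul, integral_exp_neg_mul_Ioi hK]
  simpa using (tendsto_const_nhds.sub h_err).congr' h_eq

lemma tendsto_integral_sin_mul_div_atTop_of_pos {a : ℝ} (ha : 0 < a) :
    Tendsto (fun K => ∫ k in (0 : ℝ)..K, sin (k * a) / k) atTop (𝓝 (π / 2)) := by
  have h_subst : ∀ K : ℝ, ∫ k in (0 : ℝ)..K, sin (k * a) / k = ∫ x in (0 : ℝ)..K * a, sin x / x := by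
    intro K
    calc ∫ k in (0 : ℝ)..K, sin (k * a) / k = ∫ k in (0 : ℝ)..K, a * (sin (k * a) / (k * a)) := by
          refine intervalIntegral.integral_congr fun k _ => ?_
          rcases eq_or_ne k 0 with rfl | hk
          · simp
          · field_simp
      _ = ∫ x in (0 : ℝ)..K * a, sin x / x := by
          rw [intervalIntegral.integral_const_mul,
            intervalIntegral.integral_comp_mul_right (fun x => sin x / x) ha.ne', smul_eq_mul,
            mul_inv_cancel_left₀ ha.ne', zero_mul]
  simp_rw [h_subst]
  exact tendsto_integral_sin_div_atTop.comp (tendsto_id.atTop_mul_const ha)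

lemma tendsto_integral_sin_mul_div_atTop (a : ℝ) :
    Tendsto (fun K => ∫ k in (0 : ℝ)..K, sin (k * a) / k) atTop (𝓝 (π / 2 * Real.sign a)) := by
  rcases lt_trichotomy a 0 with ha | rfl | ha
  · have h_neg : ∀ K : ℝ, ∫ k in (0 : ℝ)..K, sin (k * a) / k
        = -∫ k in (0 : ℝ)..K, sin (k * -a) / k := by
      intro K
      rw [← intervalIntegral.integral_neg]
      simp only [mul_neg, sin_neg, neg_div, neg_neg]
    simp_rw [h_neg, Real.sign_of_neg ha, mul_neg_one]
    exact (tendsto_integral_sin_mul_div_atTop_of_pos (neg_pos.2 ha)).neg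
  · simp [Real.sign_zero]
  · simpa [Real.sign_of_pos ha] using tendsto_integral_sin_mul_div_atTop_of_pos ha

lemma intervalIntegrable_sin_mul_div (a K : ℝ) :
    IntervalIntegrable (fun k => sin (k * a) / k) volume 0 K := by
  refine (intervalIntegrable_const (c := |a|)).mono_fun'
    (Measurable.aestronglyMeasurable (by fun_prop)) ?_
  refine Eventually.of_forall fun k => ?_
  rcases eq_or_ne k 0 with rfl | hk
  · simp
  · dsimp only
    rw [norm_div, norm_eq_abs, norm_eq_abs, div_le_iff₀ (abs_pos.2 hk), ← abs_mul, mul_comm a]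
    exact abs_sin_le_abs

lemma sin_mul_sin_mul_sin (A B C : ℝ) : sin A * sin B * sin C
    = (sin (A + B - C) + sin (A - B + C) + sin (-A + B + C) - sin (A + B + C)) / 4 := by
  simp only [sin_add, sin_sub, cos_add, cos_sub, sin_neg, cos_neg]
  ring

lemma sq_mul_sin_div_mul_sin_div_mul_sin_div {r₁ r₂ u : ℝ} (h₁ : r₁ ≠ 0) (h₂ : r₂ ≠ 0) (hu : u ≠ 0)
    (k : ℝ) :
    k ^ 2 * (sin (k * r₁) / (k * r₁)) * (sin (k * r₂) / (k * r₂)) * (sin (k * u) / (k * u))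
      = (4 * r₁ * r₂ * u)⁻¹ * (sin (k * (r₁ + r₂ - u)) / k + sin (k * (r₁ - r₂ + u)) / k
          + sin (k * (-r₁ + r₂ + u)) / k - sin (k * (r₁ + r₂ + u)) / k) := by
  rcases eq_or_ne k 0 with rfl | hk
  · simp
  · have h := sin_mul_sin_mul_sin (k * r₁) (k * r₂) (k * u)
    simp only [← mul_add, ← mul_sub, ← mul_neg] at h
    field_simp
    linear_combination 4 * h

lemma sign_add_sign_add_sign_eq {r₁ r₂ u : ℝ} (h₁ : 0 < r₁) (h₂ : 0 < r₂) (hu : 0 < u)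
    (hne₁ : u ≠ r₁ + r₂) (hne₂ : u ≠ |r₁ - r₂|) :
    Real.sign (r₁ + r₂ - u) + Real.sign (r₁ - r₂ + u) + Real.sign (-r₁ + r₂ + u)
      = if |r₁ - r₂| < u ∧ u < r₁ + r₂ then 3 else 1 := by
  split_ifs with h
  · rw [abs_lt] at h
    rw [Real.sign_of_pos (by linarith), Real.sign_of_pos (by linarith),
      Real.sign_of_pos (by linarith)]
    norm_num
  rcases not_and_or.1 h with h | h
  · rcases lt_abs.1 (lt_of_le_of_ne (not_lt.1 h) hne₂) with h' | h'
    · rw [Real.sign_of_pos (by linarith), Real.sign_of_pos (by linarith),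
        Real.sign_of_neg (by linarith)]
      norm_num
    · rw [Real.sign_of_pos (by linarith), Real.sign_of_neg (by linarith),
        Real.sign_of_pos (by linarith)]
      norm_num
  · rw [Real.sign_of_neg (by linarith [lt_of_le_of_ne (not_lt.1 h) hne₁.symm]),
      Real.sign_of_pos (by linarith), Real.sign_of_pos (by linarith)]
    norm_num

lemma integral_sq_mul_sin_div_mul_sin_div_mul_sin_div {r₁ r₂ u : ℝ} (h₁ : r₁ ≠ 0) (h₂ : r₂ ≠ 0)
    (hu : u ≠ 0) (K : ℝ) :
    ∫ k in (0 : ℝ)..K,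
      k ^ 2 * (sin (k * r₁) / (k * r₁)) * (sin (k * r₂) / (k * r₂)) * (sin (k * u) / (k * u))
        = (4 * r₁ * r₂ * u)⁻¹ * ((∫ k in (0 : ℝ)..K, sin (k * (r₁ + r₂ - u)) / k)
          + (∫ k in (0 : ℝ)..K, sin (k * (r₁ - r₂ + u)) / k)
          + (∫ k in (0 : ℝ)..K, sin (k * (-r₁ + r₂ + u)) / k)
          - ∫ k in (0 : ℝ)..K, sin (k * (r₁ + r₂ + u)) / k) := by
  have hI (c : ℝ) := intervalIntegrable_sin_mul_div c K
  simp_rw [sq_mul_sin_div_mul_sin_div_mul_sin_div h₁ h₂ hu]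
  rw [intervalIntegral.integral_const_mul,
    intervalIntegral.integral_sub (((hI _).add (hI _)).add (hI _)) (hI _),
    intervalIntegral.integral_add ((hI _).add (hI _)) (hI _),
    intervalIntegral.integral_add (hI _) (hI _)]

/-- The triple spherical-Bessel integral `∫₀^∞ k² j₀(kr₁) j₀(kr₂) j₀(ku) dk`, understood as
the improper limit `K → ∞` of proper integrals over `[0,K]`, exists away from the
degenerate configurations and equals `π/(4 r₁ r₂ u)` if `|r₁ − r₂| < u < r₁ + r₂`
and `0` otherwise; here `j₀(x) = sin x / x`. -/
theorem triple_j0_integral (r₁ r₂ u : ℝ) (h₁ : 0 < r₁) (h₂ : 0 < r₂) (hu : 0 < u)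
    (hne₁ : u ≠ r₁ + r₂) (hne₂ : u ≠ |r₁ - r₂|) :
    Filter.Tendsto
      (fun K : ℝ => ∫ k in (0 : ℝ)..K,
        k ^ 2 * (Real.sin (k * r₁) / (k * r₁)) * (Real.sin (k * r₂) / (k * r₂))
          * (Real.sin (k * u) / (k * u)))
      Filter.atTop
      (nhds (if |r₁ - r₂| < u ∧ u < r₁ + r₂ then Real.pi / (4 * r₁ * r₂ * u) else 0)) := by
  have h_lim := ((((tendsto_integral_sin_mul_div_atTop (r₁ + r₂ - u)).add
    (tendsto_integral_sin_mul_div_atTop (r₁ - r₂ + u))).add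
    (tendsto_integral_sin_mul_div_atTop (-r₁ + r₂ + u))).sub
    (tendsto_integral_sin_mul_div_atTop (r₁ + r₂ + u))).const_mul (4 * r₁ * r₂ * u)⁻¹
  have h_val : (4 * r₁ * r₂ * u)⁻¹ * (π / 2 * Real.sign (r₁ + r₂ - u)
      + π / 2 * Real.sign (r₁ - r₂ + u) + π / 2 * Real.sign (-r₁ + r₂ + u)
      - π / 2 * Real.sign (r₁ + r₂ + u))
        = if |r₁ - r₂| < u ∧ u < r₁ + r₂ then π / (4 * r₁ * r₂ * u) else 0 := by
    rw [← mul_add, ← mul_add, sign_add_sign_add_sign_eq h₁ h₂ hu hne₁ hne₂,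
      Real.sign_of_pos (by linarith : 0 < r₁ + r₂ + u)]
    split_ifs
    · field_simp
      ring
    · ring
  exact (h_val ▸ h_lim).congr fun K =>
    (integral_sq_mul_sin_div_mul_sin_div_mul_sin_div h₁.ne' h₂.ne' hu.ne' K).symm
end

section
/- Let 0 < r < u. Then lim_{ε→0⁺} ∫₀^∞ e^{−εk} k² j₁(kr) j₀(ku) dk = 1/(r³ − r u²) + arctanh(r/u)/(r² u), where for each ε > 0 the integrand is Lebesgue integrable on (0, ∞). That is, the (Abel-regularized) integral ∫₀^∞ k² j₁(kr) j₀(ku) dk for u > r equals 1/(r³ − r u²) + arctanh(r/u)/(r² u). -/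
/-!
Product-to-sum formulas give, for `k > 0`,
`k² j₁(kr) j₀(ku) = (cos((u-r)k) - cos((u+r)k)) / (2r²u k) - (sin((u+r)k) + sin((u-r)k)) / (2ru)`.
Against `e^{-εk}` each sine has Laplace transform `c / (ε² + c²)`, the imaginary part of
`∫₀^∞ e^{(-ε+ic)k} dk`; writing the cosine difference over `k` as `∫ₐᵇ sin(tk) dt` and
integrating in `k` first turns it into `∫ₐᵇ t / (ε² + t²) dt = ½ log((ε² + b²) / (ε² + a²))`.
The resulting closed form is continuous in `ε` at `0`, where it takes the claimed value.
-/

open Real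

/-- The real inverse hyperbolic tangent on `(−1, 1)`. -/
noncomputable def arctanh (x : ℝ) : ℝ := (1 / 2) * Real.log ((1 + x) / (1 - x))

open MeasureTheory Set Filter

variable {ε : ℝ}

lemma exp_neg_mul_mul_sin_eq_im (ε c k : ℝ) :
    rexp (-ε * k) * sin (c * k) = (Complex.exp ((-ε + c * Complex.I) * k)).im := by
  rw [Complex.exp_im]
  simp

lemma integrableOn_exp_neg_mul_mul_sin (hε : 0 < ε) (c : ℝ) :
    IntegrableOn (fun k => rexp (-ε * k) * sin (c * k)) (Ioi 0) := by
  simp_rw [exp_neg_mul_mul_sin_eq_im ε c]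
  exact (integrableOn_exp_mul_complex_Ioi (by simpa using hε) 0).im

lemma integral_exp_neg_mul_mul_sin_s15 (hε : 0 < ε) (c : ℝ) :
    ∫ k in Ioi 0, rexp (-ε * k) * sin (c * k) = c / (ε ^ 2 + c ^ 2) := by
  have hre : (-ε + c * Complex.I).re < 0 := by simpa using hε
  simp_rw [exp_neg_mul_mul_sin_eq_im ε c]
  refine (integral_im (integrableOn_exp_mul_complex_Ioi hre 0)).trans ?_
  rw [integral_exp_mul_complex_Ioi hre]
  simp [Complex.div_im, Complex.normSq]
  field_simp

lemma integrableOn_exp_neg_mul_mul_cos_sub_cos_div (hε : 0 < ε) (a b : ℝ) :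
    IntegrableOn (fun k => rexp (-ε * k) * ((cos (a * k) - cos (b * k)) / k)) (Ioi 0) := by
  refine ((integrableOn_exp_mul_Ioi (neg_lt_zero.2 hε) 0).const_mul |a - b|).mono'
    (by fun_prop) ?_
  filter_upwards [self_mem_ae_restrict measurableSet_Ioi] with k (hk : 0 < k)
  have hcos : |cos (a * k) - cos (b * k)| ≤ |a - b| * k := by
    simpa [← sub_mul, abs_mul, abs_of_pos hk] using abs_cos_sub_cos_le (a * k) (b * k)
  rw [norm_mul, norm_div, Real.norm_of_nonneg (exp_pos _).le, Real.norm_eq_abs,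
    Real.norm_of_nonneg hk.le, mul_comm]
  gcongr
  rwa [div_le_iff₀ hk]

lemma cos_sub_cos_div_eq_intervalIntegral_sin {k : ℝ} (hk : k ≠ 0) (a b : ℝ) :
    (cos (a * k) - cos (b * k)) / k = ∫ t in a..b, sin (t * k) := by
  rw [intervalIntegral.integral_comp_mul_right sin hk, integral_sin, smul_eq_mul, inv_mul_eq_div]

lemma intervalIntegral_div_sq_add_sq (hε : ε ≠ 0) (a b : ℝ) :
    ∫ t in a..b, t / (ε ^ 2 + t ^ 2) = (log (ε ^ 2 + b ^ 2) - log (ε ^ 2 + a ^ 2)) / 2 := by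
  have hderiv (t : ℝ) : HasDerivAt (fun t => log (ε ^ 2 + t ^ 2) / 2) (t / (ε ^ 2 + t ^ 2)) t := by
    refine ((((hasDerivAt_pow 2 t).const_add (ε ^ 2)).log (by positivity)).div_const 2
      ).congr_deriv ?_
    field_simp
    ring
  rw [intervalIntegral.integral_eq_sub_of_hasDerivAt (fun t _ => hderiv t)
    (by apply Continuous.intervalIntegrable; fun_prop (disch := intro; positivity))]
  ring

lemma integral_exp_neg_mul_mul_cos_sub_cos_div (hε : 0 < ε) (a b : ℝ) :
    ∫ k in Ioi 0, rexp (-ε * k) * ((cos (a * k) - cos (b * k)) / k)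
      = (log (ε ^ 2 + b ^ 2) - log (ε ^ 2 + a ^ 2)) / 2 := by
  wlog hab : a ≤ b generalizing a b
  · have hba := this b a (le_of_not_ge hab)
    rw [← neg_sub, neg_div, ← hba, ← integral_neg]
    simp only [← mul_neg, ← neg_div, neg_sub]
  have hprod : Integrable (fun p : ℝ × ℝ => rexp (-ε * p.1) * sin (p.2 * p.1))
      ((volume.restrict (Ioi 0)).prod (volume.restrict (Ioc a b))) := by
    refine ((integrableOn_exp_mul_Ioi (neg_lt_zero.2 hε) 0).mul_prod
      (integrableOn_const (C := (1 : ℝ)) measure_Ioc_lt_top.ne)).mono' (by fun_prop) ?_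
    filter_upwards with p
    simpa [abs_of_pos (exp_pos _)] using
      mul_le_mul_of_nonneg_left (abs_sin_le_one (p.2 * p.1)) (exp_pos (-ε * p.1)).le
  calc ∫ k in Ioi 0, rexp (-ε * k) * ((cos (a * k) - cos (b * k)) / k)
      = ∫ k in Ioi 0, ∫ t in Ioc a b, rexp (-ε * k) * sin (t * k) := by
        refine setIntegral_congr_fun measurableSet_Ioi fun k (hk : 0 < k) => ?_
        rw [cos_sub_cos_div_eq_intervalIntegral_sin hk.ne', intervalIntegral.integral_of_le hab,
          integral_const_mul]
    _ = ∫ t in Ioc a b, ∫ k in Ioi 0, rexp (-ε * k) * sin (t * k) := integral_integral_swap hprod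
    _ = ∫ t in a..b, t / (ε ^ 2 + t ^ 2) := by
        rw [intervalIntegral.integral_of_le hab]
        exact setIntegral_congr_fun measurableSet_Ioc fun t _ => integral_exp_neg_mul_mul_sin_s15 hε t
    _ = _ := intervalIntegral_div_sq_add_sq hε.ne' a b

lemma sq_mul_j1_mul_j0_eq {k r u : ℝ} (hk : k ≠ 0) (hr : r ≠ 0) (hu : u ≠ 0) :
    k ^ 2 * (sin (k * r) / (k * r) ^ 2 - cos (k * r) / (k * r)) * (sin (k * u) / (k * u))
      = (cos ((u - r) * k) - cos ((u + r) * k)) / k / (2 * r ^ 2 * u)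
        - (sin ((u + r) * k) + sin ((u - r) * k)) / (2 * r * u) := by
  rw [sub_mul, add_mul, cos_sub, cos_add, sin_add, sin_sub]
  field_simp
  ring

noncomputable def laplaceSqJ1J0 (r u ε : ℝ) : ℝ :=
  (log (ε ^ 2 + (u + r) ^ 2) - log (ε ^ 2 + (u - r) ^ 2)) / 2 / (2 * r ^ 2 * u)
    - ((u + r) / (ε ^ 2 + (u + r) ^ 2) + (u - r) / (ε ^ 2 + (u - r) ^ 2)) / (2 * r * u)

lemma exp_neg_mul_mul_sq_mul_j1_mul_j0_eqOn {r u : ℝ} (hr : r ≠ 0) (hu : u ≠ 0) (ε : ℝ) :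
    EqOn (fun k => rexp (-ε * k) * (k ^ 2 * (sin (k * r) / (k * r) ^ 2 - cos (k * r) / (k * r))
        * (sin (k * u) / (k * u))))
      (fun k => rexp (-ε * k) * ((cos ((u - r) * k) - cos ((u + r) * k)) / k) / (2 * r ^ 2 * u)
        - (rexp (-ε * k) * sin ((u + r) * k) + rexp (-ε * k) * sin ((u - r) * k)) / (2 * r * u))
      (Ioi 0) := fun k (hk : 0 < k) => by
  simp only [sq_mul_j1_mul_j0_eq hk.ne' hr hu]
  ring

section

variable {r u : ℝ} (hr : r ≠ 0) (hu : u ≠ 0)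
include hr hu

lemma integrableOn_exp_neg_mul_mul_sq_mul_j1_mul_j0 (hε : 0 < ε) :
    IntegrableOn (fun k => rexp (-ε * k) * (k ^ 2
      * (sin (k * r) / (k * r) ^ 2 - cos (k * r) / (k * r)) * (sin (k * u) / (k * u))))
      (Ioi 0) := by
  have hsin (c : ℝ) := integrableOn_exp_neg_mul_mul_sin hε c
  refine IntegrableOn.congr_fun ?_ (exp_neg_mul_mul_sq_mul_j1_mul_j0_eqOn hr hu ε).symm
    measurableSet_Ioi
  exact ((integrableOn_exp_neg_mul_mul_cos_sub_cos_div hε _ _).div_const _).sub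
    (((hsin _).add (hsin _)).div_const _)

lemma integral_exp_neg_mul_mul_sq_mul_j1_mul_j0 (hε : 0 < ε) :
    ∫ k in Ioi 0, rexp (-ε * k) * (k ^ 2
      * (sin (k * r) / (k * r) ^ 2 - cos (k * r) / (k * r)) * (sin (k * u) / (k * u)))
      = laplaceSqJ1J0 r u ε := by
  have hsin (c : ℝ) := integrableOn_exp_neg_mul_mul_sin hε c
  rw [setIntegral_congr_fun measurableSet_Ioi (exp_neg_mul_mul_sq_mul_j1_mul_j0_eqOn hr hu ε),
    integral_sub ?cos ?sin, integral_div, integral_div, integral_add (hsin _) (hsin _),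
    integral_exp_neg_mul_mul_cos_sub_cos_div hε,
    integral_exp_neg_mul_mul_sin_s15 hε, integral_exp_neg_mul_mul_sin_s15 hε, laplaceSqJ1J0]
  case cos => exact (integrableOn_exp_neg_mul_mul_cos_sub_cos_div hε _ _).div_const _
  case sin => exact ((hsin _).add (hsin _)).div_const _

end

section

variable {r u : ℝ} (hsub : u - r ≠ 0) (hadd : u + r ≠ 0)
include hsub hadd

lemma continuous_laplaceSqJ1J0 : Continuous (laplaceSqJ1J0 r u) := by
  unfold laplaceSqJ1J0
  fun_prop (disch := intro; positivity)

lemma laplaceSqJ1J0_zero (hr : r ≠ 0) (hu : u ≠ 0) :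
    laplaceSqJ1J0 r u 0 = 1 / (r ^ 3 - r * u ^ 2) + arctanh (r / u) / (r ^ 2 * u) := by
  have hratio : (1 + r / u) / (1 - r / u) = (u + r) / (u - r) := by field_simp
  have hden : r ^ 2 - u ^ 2 ≠ 0 := by
    rw [show r ^ 2 - u ^ 2 = -((u - r) * (u + r)) by ring]
    exact neg_ne_zero.2 (mul_ne_zero hsub hadd)
  rw [laplaceSqJ1J0, arctanh, hratio, log_div hadd hsub]
  simp only [ne_eq, OfNat.ofNat_ne_zero, not_false_eq_true, zero_pow, zero_add, log_pow]
  field_simp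
  ring

end

/-- Abel-regularized integral: for `0 < r < u`, each Abel-regularized integrand
`k ↦ e^{−εk} k² j₁(kr) j₀(ku)` is Lebesgue integrable on `(0,∞)`, and
`lim_{ε→0⁺} ∫₀^∞ e^{−εk} k² j₁(kr) j₀(ku) dk = 1/(r³ − r u²) + arctanh(r/u)/(r² u)`,
where `j₀(x) = sin x / x` and `j₁(x) = sin x / x² − cos x / x`. -/
theorem abel_regularized_j1_j0 (r u : ℝ) (hr : 0 < r) (hru : r < u) :
    (∀ ε : ℝ, 0 < ε →
      MeasureTheory.IntegrableOn
        (fun k : ℝ => Real.exp (-ε * k) * (k ^ 2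
          * (Real.sin (k * r) / (k * r) ^ 2 - Real.cos (k * r) / (k * r))
          * (Real.sin (k * u) / (k * u))))
        (Set.Ioi 0)) ∧
    Filter.Tendsto
      (fun ε : ℝ => ∫ k in Set.Ioi (0 : ℝ),
        Real.exp (-ε * k) * (k ^ 2
          * (Real.sin (k * r) / (k * r) ^ 2 - Real.cos (k * r) / (k * r))
          * (Real.sin (k * u) / (k * u))))
      (nhdsWithin 0 (Set.Ioi 0))
      (nhds (1 / (r ^ 3 - r * u ^ 2) + arctanh (r / u) / (r ^ 2 * u))) := by
  have hu : 0 < u := hr.trans hru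
  have hsub : u - r ≠ 0 := (sub_pos.2 hru).ne'
  have hadd : u + r ≠ 0 := (add_pos hu hr).ne'
  refine ⟨fun ε hε => integrableOn_exp_neg_mul_mul_sq_mul_j1_mul_j0 hr.ne' hu.ne' hε, ?_⟩
  rw [← laplaceSqJ1J0_zero hsub hadd hr.ne' hu.ne']
  refine (((continuous_laplaceSqJ1J0 hsub hadd).tendsto 0).mono_left nhdsWithin_le_nhds).congr' ?_
  filter_upwards [self_mem_nhdsWithin] with ε hε
  exact (integral_exp_neg_mul_mul_sq_mul_j1_mul_j0 hr.ne' hu.ne' hε).symm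
end
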